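/- arXiv:1505.05831 — 3 statements merged into one kernel-verified Lean document; each statement's English description precedes it below -/
import Mathlib

section
/- For every invertible affine transformation A of (Fin n → ZMod 2) (i.e., A(v) = L(v) + t with L an F₂-linear automorphism and t a fixed vector), a function f : (Fin n → ZMod 2) → ZMod 2 belongs to RM(n, r) if and only if f ∘ A belongs to RM(n, r); that is, RM(n, r) is invariant under the affine general linear group acting on its coordinates. -/
open Classical in
noncomputable def mu {α : Type*} [Fintype α] (ε : ℝ) (Ω : Set (Finset α)) : ℝ :=
  ∑ ω ∈ Finset.univ.filter (fun w => w ∈ Ω),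
    ε ^ ω.card * (1 - ε) ^ (Fintype.card α - ω.card)

def Omega {ι : Type*} (C : Submodule (ZMod 2) (ι → ZMod 2)) (i : ι) :
    Set (Finset {j : ι // j ≠ i}) :=
  {ω | ∃ c ∈ C, c i = 1 ∧ ∀ (j : ι) (h : j ≠ i), c j = 1 → (⟨j, h⟩ : {j : ι // j ≠ i}) ∈ ω}

def TwoTransitive {ι : Type*} (C : Submodule (ZMod 2) (ι → ZMod 2)) : Prop :=
  ∀ a b c d : ι, a ≠ b → c ≠ d →
    ∃ π : Equiv.Perm ι, π a = c ∧ π b = d ∧ ∀ x, x ∈ C ↔ (x ∘ π) ∈ C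

def RM (n r : ℕ) : Submodule (ZMod 2) ((Fin n → ZMod 2) → ZMod 2) where
  carrier := {f | ∃ p : MvPolynomial (Fin n) (ZMod 2),
    p.totalDegree ≤ r ∧ ∀ v, f v = MvPolynomial.eval v p}
  zero_mem' := ⟨0, by simp, fun v => by simp⟩
  add_mem' := by
    rintro f g ⟨p, hp, hf⟩ ⟨q, hq, hg⟩
    exact ⟨p + q, le_trans (MvPolynomial.totalDegree_add p q) (max_le hp hq),
      fun v => by simp [hf v, hg v]⟩
  smul_mem' := by
    rintro c f ⟨p, hp, hf⟩
    exact ⟨c • p, le_trans (MvPolynomial.totalDegree_smul_le c p) hp,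
      fun v => by simp [hf v]⟩


open MvPolynomial in
lemma totalDegree_eval₂C_le {σ : Type*} {R : Type*} [CommSemiring R]
    (g : σ → MvPolynomial σ R) (hg : ∀ i, (g i).totalDegree ≤ 1)
    (p : MvPolynomial σ R) :
    (eval₂ C g p).totalDegree ≤ p.totalDegree := by
  rw [eval₂_eq]
  refine (totalDegree_finset_sum _ _).trans (Finset.sup_le fun d hd => ?_)
  calc (C (coeff d p) * ∏ i ∈ d.support, g i ^ d i).totalDegree
      ≤ (C (coeff d p)).totalDegree + (∏ i ∈ d.support, g i ^ d i).totalDegree :=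
        totalDegree_mul _ _
    _ ≤ 0 + ∑ i ∈ d.support, d i * 1 := by
        refine add_le_add (le_of_eq (totalDegree_C _)) ?_
        refine (totalDegree_finset_prod _ _).trans (Finset.sum_le_sum fun i _ => ?_)
        exact (totalDegree_pow _ _).trans (Nat.mul_le_mul_left _ (hg i))
    _ ≤ p.totalDegree := by
        simpa [Finsupp.sum] using (le_totalDegree hd : d.sum (fun _ e => e) ≤ _)

open MvPolynomial in
lemma rm_comp_affine (n r : ℕ)
    (M : (Fin n → ZMod 2) →ₗ[ZMod 2] (Fin n → ZMod 2)) (t : Fin n → ZMod 2)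
    (f : (Fin n → ZMod 2) → ZMod 2) (hf : f ∈ RM n r) :
    (fun v => f (M v + t)) ∈ RM n r := by
  obtain ⟨p, hp, hfp⟩ := hf
  set g : Fin n → MvPolynomial (Fin n) (ZMod 2) :=
    fun i => C (t i) + ∑ j, C ((M (Pi.single j 1)) i) * X j with hgdef
  have hg : ∀ i, (g i).totalDegree ≤ 1 := by
    intro i
    refine (totalDegree_add _ _).trans (max_le (by simp) ?_)
    refine (totalDegree_finset_sum _ _).trans (Finset.sup_le fun j _ => ?_)
    exact (totalDegree_mul _ _).trans (by simp [totalDegree_X])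
  have heval : ∀ v : Fin n → ZMod 2, (fun i => eval v (g i)) = M v + t := by
    intro v
    funext i
    have hv : M v = ∑ j, v j • M (Pi.single j 1) := by
      conv_lhs => rw [show v = ∑ j, Pi.single j (v j) from (Finset.univ_sum_single v).symm]
      rw [map_sum]
      congr 1
      funext j
      rw [← map_smul]
      congr 1
      ext k
      by_cases h : k = j <;> simp [Pi.single_apply, h, smul_eq_mul]
    simp [hgdef, hv, Finset.sum_apply, mul_comm, add_comm]
  refine ⟨eval₂ C g p, le_trans (totalDegree_eval₂C_le g hg p) hp, fun v => ?_⟩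
  have := eval₂_assoc (RingHom.id (ZMod 2)) v g p
  simp only [eval] at *
  rw [hfp (M v + t), ← heval v]
  calc eval (fun i => eval v (g i)) p
      = eval₂ (RingHom.id _) (fun i => eval₂ (RingHom.id _) v (g i)) p := rfl
    _ = eval₂ (RingHom.id _) v (eval₂ C g p) := eval₂_assoc _ _ _ _
    _ = eval v (eval₂ C g p) := rfl


/-- $RM(n,r)$ is invariant under the affine general linear group acting on its
coordinates: for every invertible affine transformation $A(v) = L(v) + t$,
$f \in RM(n,r)$ iff $f \circ A \in RM(n,r)$. -/
theorem rm_affine_invariant (n r : ℕ)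
    (L : (Fin n → ZMod 2) ≃ₗ[ZMod 2] (Fin n → ZMod 2)) (t : Fin n → ZMod 2)
    (f : (Fin n → ZMod 2) → ZMod 2) :
    f ∈ RM n r ↔ (fun v => f (L v + t)) ∈ RM n r := by
  constructor
  · intro hf
    exact rm_comp_affine n r L.toLinearMap t f hf
  · intro hf
    have h2 := rm_comp_affine n r L.symm.toLinearMap (L.symm t) _ hf
    convert h2 using 2 with v
    simp only [LinearEquiv.coe_coe, ← map_add, LinearEquiv.apply_symm_apply]
    congr 1
    funext i
    rw [add_assoc]
    simp [CharTwo.add_self_eq_zero]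
end

section
/- For 0 ≤ r ≤ n, the minimum distance of RM(n, r) is 2^{n−r}: every nonzero codeword of RM(n, r) has Hamming weight at least 2^{n−r}, and there exists a codeword of RM(n, r) of Hamming weight exactly 2^{n−r}. -/
section RMhelpers
open Finset MvPolynomial

lemma zmod2_sum (F : ZMod 2 → ℕ) : ∑ a : ZMod 2, F a = F 0 + F 1 := rfl

lemma zmod2_ne_zero_iff (x : ZMod 2) : x ≠ 0 ↔ x = 1 := by revert x; decide

lemma wt_cons (n : ℕ) (f : (Fin (n+1) → ZMod 2) → ZMod 2) :
    (univ.filter fun w => f w ≠ 0).card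
      = (univ.filter fun v : Fin n → ZMod 2 => f (Fin.cons 0 v) ≠ 0).card
      + (univ.filter fun v : Fin n → ZMod 2 => f (Fin.cons 1 v) ≠ 0).card := by
  classical
  have h := Fintype.sum_equiv (Fin.consEquiv (fun _ : Fin (n+1) => ZMod 2))
    (fun x => if f (Fin.cons x.1 x.2) ≠ 0 then 1 else 0)
    (fun w => if f w ≠ 0 then 1 else 0) (fun x => rfl)
  rw [Finset.card_filter, Finset.card_filter, Finset.card_filter, ← h,
    Fintype.sum_prod_type]
  exact zmod2_sum _

lemma wt_pos {n : ℕ} {f : (Fin n → ZMod 2) → ZMod 2} (hf : f ≠ 0) :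
    1 ≤ (univ.filter fun v => f v ≠ 0).card := by
  obtain ⟨v, hv⟩ := Function.ne_iff.mp hf
  exact Finset.card_pos.mpr ⟨v, Finset.mem_filter.mpr ⟨Finset.mem_univ v, by simpa using hv⟩⟩

lemma rm_lb : ∀ n r (f : (Fin n → ZMod 2) → ZMod 2), f ∈ RM n r → f ≠ 0 →
    2 ^ (n - r) ≤ (univ.filter fun v => f v ≠ 0).card := by
  intro n
  induction n with
  | zero => intro r f _ hf; simpa using wt_pos hf
  | succ n ih =>
    intro r f hmem hf
    rcases le_or_gt (n + 1) r with hrn | hrn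
    · rw [Nat.sub_eq_zero_of_le hrn, pow_zero]; exact wt_pos hf
    -- now r ≤ n
    have hrn' : r ≤ n := Nat.lt_succ_iff.mp hrn
    obtain ⟨p, hp, hfp⟩ := hmem
    set P := finSuccEquiv (ZMod 2) n p with hP
    set N := P.natDegree + 1 with hN
    set c : ℕ → MvPolynomial (Fin n) (ZMod 2) := fun i => P.coeff i with hc
    have hdegc : ∀ i, c i ≠ 0 → (c i).totalDegree + i ≤ r :=
      fun i hi => le_trans (totalDegree_coeff_finSuccEquiv_add_le p i hi) hp
    set g0 : (Fin n → ZMod 2) → ZMod 2 := fun v => f (Fin.cons 0 v) with hg0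
    set g1 : (Fin n → ZMod 2) → ZMod 2 := fun v => f (Fin.cons 1 v) with hg1
    have hev : ∀ (y : ZMod 2) v, f (Fin.cons y v) =
        Polynomial.eval y (Polynomial.map (eval v) P) := by
      intro y v
      rw [hfp, eval_eq_eval_mv_eval']
    have hg0e : ∀ v, g0 v = eval v (c 0) := by
      intro v
      show f (Fin.cons 0 v) = _
      rw [hev, ← Polynomial.coeff_zero_eq_eval_zero, Polynomial.coeff_map]
    set D : MvPolynomial (Fin n) (ZMod 2) := ∑ i ∈ (Finset.range N).erase 0, c i with hD
    have hg1e : ∀ v, g1 v = eval v (c 0) + eval v D := by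
      intro v
      show f (Fin.cons 1 v) = _
      rw [hev, Polynomial.eval_eq_sum_range' (lt_of_le_of_lt
        Polynomial.natDegree_map_le (Nat.lt_succ_self _)) 1]
      simp only [one_pow, mul_one, Polynomial.coeff_map]
      rw [hD, map_sum, ← Finset.add_sum_erase _ _ (by simp [hN] : 0 ∈ Finset.range N)]
    have hsum : ∀ v, g0 v + g1 v = eval v D := by
      intro v
      rw [hg0e, hg1e, ← add_assoc, ← two_mul]
      have : (2 : ZMod 2) = 0 := rfl
      rw [this, zero_mul, zero_add]
    have hDdeg : D.totalDegree ≤ r - 1 := by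
      refine le_trans (totalDegree_finset_sum _ _) (Finset.sup_le ?_)
      intro i hi
      rcases eq_or_ne (c i) 0 with h0 | h0
      · simp [h0]
      · have := hdegc i h0
        have hi1 : 1 ≤ i := Nat.one_le_iff_ne_zero.mpr (Finset.ne_of_mem_erase hi)
        omega
    have hg0mem : g0 ∈ RM n r := by
      refine ⟨c 0, ?_, hg0e⟩
      rcases eq_or_ne (c 0) 0 with h0 | h0
      · simp [h0]
      · simpa using hdegc 0 h0
    have hwt : (univ.filter fun w => f w ≠ 0).card
        = (univ.filter fun v => g0 v ≠ 0).card + (univ.filter fun v => g1 v ≠ 0).card :=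
      wt_cons n f
    rw [hwt]
    rcases eq_or_ne (fun v => g0 v + g1 v) (0 : (Fin n → ZMod 2) → ZMod 2) with hz | hz
    · -- g1 = g0
      have hgg : g1 = g0 := by
        funext v
        have := congrFun hz v
        have h2 : ∀ a b : ZMod 2, a + b = 0 → b = a := by decide
        exact h2 _ _ this
      have hg0ne : g0 ≠ 0 := by
        intro h0
        apply hf
        funext w
        have : f (Fin.cons (w 0) (Fin.tail w)) = 0 := by
          rcases (by revert w; intro w; exact (by decide : ∀ a : ZMod 2, a = 0 ∨ a = 1) (w 0)) with h | h
          · rw [h]; exact congrFun h0 _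
          · rw [h]; exact congrFun (hgg.trans h0) _
        rwa [Fin.cons_self_tail] at this
      have hle := ih r g0 hg0mem hg0ne
      have : 2 ^ (n + 1 - r) = 2 ^ (n - r) + 2 ^ (n - r) := by
        rw [show n + 1 - r = (n - r) + 1 by omega, pow_succ]; ring
      rw [this, hgg]
      omega
    · -- g0 + g1 ≠ 0 : use D
      have hr1 : 1 ≤ r := by
        by_contra h
        push_neg at h
        interval_cases r
        apply hz
        funext v
        rw [hsum v, hD]
        have : ∀ i ∈ (Finset.range N).erase 0, c i = 0 := by
          intro i hi
          by_contra h0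
          have := hdegc i h0
          have : 1 ≤ i := Nat.one_le_iff_ne_zero.mpr (Finset.ne_of_mem_erase hi)
          omega
        rw [Finset.sum_congr rfl this]
        simp
      have hmemD : (fun v => g0 v + g1 v) ∈ RM n (r - 1) := ⟨D, by exact_mod_cast hDdeg, hsum⟩
      have hle := ih (r - 1) _ hmemD hz
      have hsub : (univ.filter fun v => g0 v + g1 v ≠ 0)
          ⊆ (univ.filter fun v => g0 v ≠ 0) ∪ (univ.filter fun v => g1 v ≠ 0) := by
        intro v hv
        simp only [Finset.mem_filter, Finset.mem_univ, true_and] at hv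
        simp only [Finset.mem_union, Finset.mem_filter, Finset.mem_univ, true_and]
        by_contra h
        push_neg at h
        rw [h.1, h.2, add_zero] at hv
        exact hv rfl
      have hcard := le_trans (Finset.card_le_card hsub) (Finset.card_union_le _ _)
      have : n - (r - 1) = n + 1 - r := by omega
      rw [this] at hle
      omega

lemma rm_count (n r : ℕ) (hr : r ≤ n) (T : Finset (Fin n)) (hT : T.card = r) :
    (univ.filter fun v : Fin n → ZMod 2 => (∏ i ∈ T, v i) ≠ 0).card = 2 ^ (n - r) := by
  classical
  have heq : (univ.filter fun v : Fin n → ZMod 2 => (∏ i ∈ T, v i) ≠ 0)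
      = Fintype.piFinset (fun i => if i ∈ T then ({1} : Finset (ZMod 2)) else univ) := by
    ext v
    simp only [Finset.mem_filter, Finset.mem_univ, true_and, Fintype.mem_piFinset]
    rw [Finset.prod_ne_zero_iff]
    constructor
    · intro h i
      by_cases hi : i ∈ T
      · simp [hi, (zmod2_ne_zero_iff _).mp (h i hi)]
      · simp [hi]
    · intro h i hi
      have := h i
      rw [if_pos hi, Finset.mem_singleton] at this
      rw [this]
      exact one_ne_zero
  rw [heq, Fintype.card_piFinset]
  have : ∀ i : Fin n, (if i ∈ T then ({1} : Finset (ZMod 2)) else univ).card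
      = if i ∈ T then 1 else 2 := by
    intro i; by_cases hi : i ∈ T <;> simp [hi]
  rw [Finset.prod_congr rfl fun i _ => this i, Finset.prod_ite]
  simp only [Finset.prod_const]
  have h1 : (univ.filter fun i => i ∈ T) = T := by ext i; simp
  have h2 : (univ.filter fun i => i ∉ T) = Tᶜ := by ext i; simp
  rw [h1, h2, Finset.card_compl, hT, one_pow, one_mul, Fintype.card_fin]

end RMhelpers

/-- The minimum distance of $RM(n,r)$ is $2^{n-r}$: every nonzero codeword has
Hamming weight at least $2^{n-r}$, and some codeword has weight exactly $2^{n-r}$. -/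
theorem rm_min_distance (n r : ℕ) (hr : r ≤ n) :
    (∀ f ∈ RM n r, f ≠ 0 →
      2 ^ (n - r) ≤ (Finset.univ.filter (fun v : Fin n → ZMod 2 => f v ≠ 0)).card) ∧
    (∃ f ∈ RM n r,
      (Finset.univ.filter (fun v : Fin n → ZMod 2 => f v ≠ 0)).card = 2 ^ (n - r)) := by
  classical
  constructor
  · intro f hmem hf
    exact rm_lb n r f hmem hf
  · obtain ⟨T, -, hT⟩ := Finset.exists_subset_card_eq (s := (Finset.univ : Finset (Fin n))) (n := r)
      (by simpa using hr)
    refine ⟨fun v => ∏ i ∈ T, v i, ⟨∏ i ∈ T, MvPolynomial.X i, ?_, fun v => by simp⟩, ?_⟩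
    · refine le_trans (MvPolynomial.totalDegree_finset_prod T _) ?_
      simp [MvPolynomial.totalDegree_X, hT]
    · exact rm_count n r hr T hT
end

section
/- Area Theorem (total area): for every binary linear code C of length N and dimension K, the average EXIT function h(ε) = (1/N) Σ_{i=1}^{N} μ_ε(Ω_i(C)) satisfies ∫₀¹ h(ε) dε = K/N, the rate of the code. -/
-- ## Auxiliary lemmas

lemma zmod2_cases (z : ZMod 2) : z = 0 ∨ z = 1 := by fin_cases z <;> [exact Or.inl rfl; exact Or.inr rfl]

open intervalIntegral in
lemma beta_nat (a b : ℕ) : ∫ x in (0:ℝ)..1, x ^ a * (1 - x) ^ b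
    = (a.factorial * b.factorial : ℝ) / (a + b + 1).factorial := by
  induction b generalizing a with
  | zero =>
    simp only [pow_zero, mul_one, integral_pow, Nat.factorial_zero, Nat.cast_one,
      Nat.add_zero, Nat.factorial_succ, Nat.cast_mul]
    rw [one_pow]; push_cast; field_simp
    simp
  | succ b ih =>
    have hderu : ∀ x ∈ Set.uIcc (0:ℝ) 1, HasDerivAt (fun x : ℝ => x ^ (a+1) / (a+1))
        (x ^ a) x := by
      intro x _
      have h := (hasDerivAt_pow (a+1) x).div_const ((a:ℝ)+1)
      refine h.congr_deriv ?_
      have : ((a:ℝ)+1) ≠ 0 := by positivity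
      rw [Nat.add_sub_cancel]; push_cast; field_simp
    have hderv : ∀ x ∈ Set.uIcc (0:ℝ) 1, HasDerivAt (fun x : ℝ => (1 - x) ^ (b+1))
        (-((b+1) * (1 - x) ^ b)) x := by
      intro x _
      have h := (((hasDerivAt_id x).const_sub 1).fun_pow (b+1))
      simpa [mul_comm, mul_assoc] using h
    have hiu : IntervalIntegrable (fun x : ℝ => x ^ a) MeasureTheory.volume 0 1 :=
      (by continuity : Continuous fun x : ℝ => x ^ a).intervalIntegrable _ _
    have hiv : IntervalIntegrable (fun x : ℝ => -((b+1 : ℝ) * (1 - x) ^ b))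
        MeasureTheory.volume 0 1 :=
      (by continuity : Continuous fun x : ℝ => -((b+1 : ℝ) * (1 - x) ^ b)).intervalIntegrable _ _
    have ibp := integral_mul_deriv_eq_deriv_mul hderu hderv hiu hiv
    have h1 : ((1:ℝ) - 1) ^ (b+1) = 0 := by norm_num
    have h0 : ((0:ℝ)) ^ (a+1) / ((a:ℝ)+1) = 0 := by norm_num
    rw [h1, h0] at ibp
    simp only [mul_zero, zero_mul, zero_sub] at ibp
    have hconst : ∀ x : ℝ, x ^ (a+1) / ((a:ℝ)+1) * (-((b+1) * (1 - x) ^ b))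
        = (-((b:ℝ)+1) / ((a:ℝ)+1)) * (x ^ (a+1) * (1 - x) ^ b) := by
      intro x; field_simp
    rw [intervalIntegral.integral_congr (g := fun x =>
        (-((b:ℝ)+1) / ((a:ℝ)+1)) * (x ^ (a+1) * (1 - x) ^ b)) (fun x _ => hconst x),
      intervalIntegral.integral_const_mul] at ibp
    have key : ∫ x in (0:ℝ)..1, x ^ a * (1 - x) ^ (b+1)
        = (((b:ℝ)+1) / ((a:ℝ)+1)) * ∫ x in (0:ℝ)..1, x ^ (a+1) * (1 - x) ^ b := by
      linear_combination ibp
    rw [key, ih (a+1), show a+1+b+1 = a+(b+1)+1 from by ring]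
    have ha : ((a:ℝ)+1) ≠ 0 := by positivity
    have hf2 : ((a + (b + 1) + 1).factorial : ℝ) ≠ 0 :=
      Nat.cast_ne_zero.mpr (Nat.factorial_ne_zero _)
    push_cast [Nat.factorial_succ]
    field_simp


variable {N : ℕ}

def zeroOn (N : ℕ) (S : Finset (Fin N)) : Submodule (ZMod 2) (Fin N → ZMod 2) where
  carrier := {f | ∀ j ∉ S, f j = 0}
  add_mem' := fun hf hg j hj => by simp [hf j hj, hg j hj]
  zero_mem' := fun j hj => rfl
  smul_mem' := fun c f hf j hj => by simp [hf j hj]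

noncomputable def dS (C : Submodule (ZMod 2) (Fin N → ZMod 2)) (S : Finset (Fin N)) : ℕ :=
  Module.finrank (ZMod 2) (C ⊓ zeroOn N S : Submodule (ZMod 2) (Fin N → ZMod 2))

lemma dS_univ (C : Submodule (ZMod 2) (Fin N → ZMod 2)) :
    dS C Finset.univ = Module.finrank (ZMod 2) C := by
  unfold dS
  have h : C ⊓ zeroOn N Finset.univ = C := by
    rw [inf_eq_left]
    intro f _ j hj
    exact absurd (Finset.mem_univ j) hj
  rw [h]

lemma dS_empty (C : Submodule (ZMod 2) (Fin N → ZMod 2)) : dS C ∅ = 0 := by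
  unfold dS
  have : C ⊓ zeroOn N ∅ = ⊥ := by
    rw [eq_bot_iff]
    rintro f ⟨_, hf⟩
    exact funext fun j => hf j (Finset.notMem_empty j)
  rw [this]
  simp

open Classical in
lemma dS_erase (C : Submodule (ZMod 2) (Fin N → ZMod 2)) (S : Finset (Fin N)) (i : Fin N)
    (hi : i ∈ S) :
    dS C S = dS C (S.erase i) +
      (if ∃ c ∈ C, (∀ j ∉ S, c j = 0) ∧ c i = 1 then 1 else 0) := by
  classical
  set D : Submodule (ZMod 2) (Fin N → ZMod 2) := C ⊓ zeroOn N S with hD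
  let φ : D →ₗ[ZMod 2] ZMod 2 := (LinearMap.proj i).comp D.subtype
  have hle : C ⊓ zeroOn N (S.erase i) ≤ D := by
    rintro f ⟨hfC, hf⟩
    exact ⟨hfC, fun j hj => hf j (fun hj' => hj (Finset.mem_of_mem_erase hj'))⟩
  have hker : LinearMap.ker φ = Submodule.comap D.subtype (C ⊓ zeroOn N (S.erase i)) := by
    ext x
    simp only [LinearMap.mem_ker, Submodule.mem_comap, Submodule.coe_subtype,
      Submodule.mem_inf]
    constructor
    · intro hx
      refine ⟨x.2.1, fun j hj => ?_⟩
      by_cases hji : j = i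
      · subst hji; exact hx
      · exact x.2.2 j (fun hjS => hj (Finset.mem_erase.mpr ⟨hji, hjS⟩))
    · rintro ⟨-, hx⟩
      exact hx i (Finset.notMem_erase i S)
  have hkerrank : Module.finrank (ZMod 2) (LinearMap.ker φ) = dS C (S.erase i) := by
    rw [hker]
    exact LinearEquiv.finrank_eq (Submodule.comapSubtypeEquivOfLe hle)
  have hrank := LinearMap.finrank_range_add_finrank_ker φ
  have hrangerank : Module.finrank (ZMod 2) (LinearMap.range φ)
      = (if ∃ c ∈ C, (∀ j ∉ S, c j = 0) ∧ c i = 1 then 1 else 0) := by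
    split_ifs with h
    · obtain ⟨c, hcC, hc0, hci⟩ := h
      have hcD : c ∈ D := ⟨hcC, hc0⟩
      have : LinearMap.range φ = ⊤ := by
        rw [eq_top_iff]
        intro z _
        rcases zmod2_cases z with rfl | rfl
        · exact Submodule.zero_mem _
        · exact ⟨⟨c, hcD⟩, hci⟩
      rw [this]
      simp [finrank_top]
    · have : LinearMap.range φ = ⊥ := by
        rw [eq_bot_iff]
        rintro z ⟨⟨c, hcD⟩, rfl⟩
        rcases zmod2_cases (c i) with h0 | h1
        · exact (Submodule.mem_bot (ZMod 2)).mpr h0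
        · exact absurd ⟨c, hcD.1, hcD.2, h1⟩ h
      rw [this]
      exact finrank_bot _ _
  have : dS C S = Module.finrank (ZMod 2) D := rfl
  rw [this, ← hrank, hkerrank, hrangerank, add_comm]
noncomputable def wgt (N : ℕ) (k : ℕ) : ℝ :=
  ((k - 1).factorial : ℝ) * ((N - k).factorial) / (N.factorial)

noncomputable def uwt (N : ℕ) (k : ℕ) : ℝ :=
  (k.factorial : ℝ) * ((N - k).factorial) / (N.factorial)

lemma card_mul_wgt {k : ℕ} (hk : k ≠ 0) : (k : ℝ) * wgt N k = uwt N k := by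
  obtain ⟨m, rfl⟩ := Nat.exists_eq_succ_of_ne_zero hk
  simp only [wgt, uwt, Nat.succ_sub_one, Nat.factorial_succ]
  push_cast
  ring

lemma compl_mul_wgt {k : ℕ} (hk : k < N) :
    ((N : ℝ) - k) * wgt N (k + 1) = uwt N k := by
  simp only [wgt, uwt, Nat.add_sub_cancel]
  have h1 : N - (k + 1) + 1 = N - k := by omega
  have h2 : ((N - k).factorial : ℝ) = ((N:ℝ) - k) * (N - (k+1)).factorial := by
    rw [← h1, Nat.factorial_succ]
    push_cast [Nat.cast_sub (show k + 1 ≤ N by omega)]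
    ring
  rw [h2]
  ring

open Classical Finset in
lemma main_sum (C : Submodule (ZMod 2) (Fin N → ZMod 2)) :
    ∑ S : Finset (Fin N), ∑ i ∈ S,
        (if ∃ c ∈ C, (∀ j ∉ S, c j = 0) ∧ c i = 1 then (1:ℝ) else 0) * wgt N S.card
      = (Module.finrank (ZMod 2) C : ℝ) := by
  -- replace indicator by rank difference
  have step1 : ∀ S : Finset (Fin N), ∀ i ∈ S,
      (if ∃ c ∈ C, (∀ j ∉ S, c j = 0) ∧ c i = 1 then (1:ℝ) else 0)
        = (dS C S : ℝ) - (dS C (S.erase i) : ℝ) := by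
    intro S i hi
    have h := dS_erase C S i hi
    have : ((dS C S : ℝ)) = (dS C (S.erase i) : ℝ) +
        (if ∃ c ∈ C, (∀ j ∉ S, c j = 0) ∧ c i = 1 then (1:ℝ) else 0) := by
      rw [h]; push_cast; split_ifs <;> simp
    linarith [this]
  have split : ∑ S : Finset (Fin N), ∑ i ∈ S,
      (if ∃ c ∈ C, (∀ j ∉ S, c j = 0) ∧ c i = 1 then (1:ℝ) else 0) * wgt N S.card
      = (∑ S : Finset (Fin N), ∑ i ∈ S, (dS C S : ℝ) * wgt N S.card)
        - ∑ S : Finset (Fin N), ∑ i ∈ S, (dS C (S.erase i) : ℝ) * wgt N S.card := by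
    rw [← Finset.sum_sub_distrib]
    refine Finset.sum_congr rfl fun S _ => ?_
    rw [← Finset.sum_sub_distrib]
    refine Finset.sum_congr rfl fun i hi => ?_
    rw [step1 S i hi]; ring
  rw [split]
  -- first sum
  have first : ∑ S : Finset (Fin N), ∑ i ∈ S, (dS C S : ℝ) * wgt N S.card
      = ∑ S : Finset (Fin N), (dS C S : ℝ) * uwt N S.card := by
    refine Finset.sum_congr rfl fun S _ => ?_
    rw [Finset.sum_const, nsmul_eq_mul]
    rcases eq_or_ne S ∅ with rfl | hS
    · simp [dS_empty]
    · have hc : S.card ≠ 0 := by simpa [Finset.card_eq_zero] using hS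
      rw [← card_mul_wgt hc]; ring
  -- second sum : reindex
  have second : ∑ S : Finset (Fin N), ∑ i ∈ S, (dS C (S.erase i) : ℝ) * wgt N S.card
      = ∑ T : Finset (Fin N), ∑ i ∈ Tᶜ, (dS C T : ℝ) * wgt N (T.card + 1) := by
    rw [Finset.sum_sigma', Finset.sum_sigma']
    refine Finset.sum_nbij' (fun p => ⟨p.1.erase p.2, p.2⟩) (fun p => ⟨insert p.2 p.1, p.2⟩)
      ?_ ?_ ?_ ?_ ?_
    · rintro ⟨S, i⟩ hp
      simp only [Finset.mem_sigma, Finset.mem_univ, true_and] at hp ⊢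
      simp [Finset.mem_compl]
    · rintro ⟨T, i⟩ hp
      simp only [Finset.mem_sigma, Finset.mem_univ, true_and, Finset.mem_compl] at hp ⊢
      exact Finset.mem_insert_self _ _
    · rintro ⟨S, i⟩ hp
      simp only [Finset.mem_sigma, Finset.mem_univ, true_and] at hp
      simp [Finset.insert_erase hp]
    · rintro ⟨T, i⟩ hp
      simp only [Finset.mem_sigma, Finset.mem_univ, true_and, Finset.mem_compl] at hp
      simp [Finset.erase_insert hp]
    · rintro ⟨S, i⟩ hp
      simp only [Finset.mem_sigma, Finset.mem_univ, true_and] at hp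
      have : (S.erase i).card + 1 = S.card := Finset.card_erase_add_one hp
      rw [this]
  have second2 : ∑ T : Finset (Fin N), ∑ i ∈ Tᶜ, (dS C T : ℝ) * wgt N (T.card + 1)
      = (∑ T : Finset (Fin N), (dS C T : ℝ) * uwt N T.card)
        - (Module.finrank (ZMod 2) C : ℝ) := by
    have huwN : uwt N N = 1 := by
      simp [uwt, Nat.factorial_ne_zero, div_self,
        (Nat.cast_ne_zero (R := ℝ)).mpr (Nat.factorial_ne_zero N)]
    have : ∀ T : Finset (Fin N), ∑ i ∈ Tᶜ, (dS C T : ℝ) * wgt N (T.card + 1)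
        = (dS C T : ℝ) * uwt N T.card - (if T = Finset.univ then (dS C T : ℝ) else 0) := by
      intro T
      rw [Finset.sum_const, nsmul_eq_mul, Finset.card_compl, Fintype.card_fin]
      rcases eq_or_ne T Finset.univ with rfl | hT
      · simp [Finset.card_univ, Fintype.card_fin, huwN]
      · have hlt : T.card < N := by
          have := Finset.card_lt_card (Finset.ssubset_univ_iff.mpr hT)
          simpa [Finset.card_univ, Fintype.card_fin] using this
        rw [if_neg hT, sub_zero, ← compl_mul_wgt hlt]
        push_cast [Nat.cast_sub hlt.le]
        ring
    rw [Finset.sum_congr rfl (fun T _ => this T), Finset.sum_sub_distrib]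
    congr 1
    rw [Finset.sum_ite_eq' Finset.univ Finset.univ (fun T => (dS C T : ℝ))]
    simp [dS_univ]
  rw [first, second, second2]
  ring
section PerI

variable {N : ℕ}

open Finset in
lemma mem_fwd {i : Fin N} (ω : Finset {j : Fin N // j ≠ i}) (j : Fin N) :
    j ∈ insert i (ω.map (Function.Embedding.subtype fun j => j ≠ i)) ↔
      j = i ∨ ∃ h : j ≠ i, (⟨j, h⟩ : {j : Fin N // j ≠ i}) ∈ ω := by
  simp only [Finset.mem_insert, Finset.mem_map, Function.Embedding.coe_subtype]
  constructor
  · rintro (rfl | ⟨⟨a, ha⟩, haω, rfl⟩)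
    · exact Or.inl rfl
    · exact Or.inr ⟨ha, haω⟩
  · rintro (rfl | ⟨h, hω⟩)
    · exact Or.inl rfl
    · exact Or.inr ⟨⟨j, h⟩, hω, rfl⟩

open Finset in
lemma omega_iff (C : Submodule (ZMod 2) (Fin N → ZMod 2)) (i : Fin N)
    (ω : Finset {j : Fin N // j ≠ i}) :
    ω ∈ Omega C i ↔ ∃ c ∈ C,
      (∀ j ∉ insert i (ω.map (Function.Embedding.subtype fun j => j ≠ i)), c j = 0)
        ∧ c i = 1 := by
  constructor
  · rintro ⟨c, hC, hci, hcov⟩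
    refine ⟨c, hC, fun j hj => ?_, hci⟩
    have hji : j ≠ i := by rintro rfl; exact hj (Finset.mem_insert_self _ _)
    rcases zmod2_cases (c j) with h0 | h1
    · exact h0
    · exact absurd ((mem_fwd ω j).mpr (Or.inr ⟨hji, hcov j hji h1⟩)) hj
  · rintro ⟨c, hC, h0, hci⟩
    refine ⟨c, hC, hci, fun j hj hc1 => ?_⟩
    by_contra hnot
    have : j ∉ insert i (ω.map (Function.Embedding.subtype fun j => j ≠ i)) := by
      rw [mem_fwd]
      rintro (rfl | ⟨h, hω⟩)
      · exact hj rfl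
      · exact hnot hω
    rw [h0 j this] at hc1
    exact absurd hc1 (by decide)

open Classical Finset in
lemma sum_omega_eq (C : Submodule (ZMod 2) (Fin N → ZMod 2)) (i : Fin N) :
    ∑ ω ∈ Finset.univ.filter (fun w => w ∈ Omega C i), wgt N (ω.card + 1)
      = ∑ S ∈ Finset.univ.filter (fun S : Finset (Fin N) =>
          i ∈ S ∧ ∃ c ∈ C, (∀ j ∉ S, c j = 0) ∧ c i = 1), wgt N S.card := by
  refine Finset.sum_nbij'
    (fun ω => insert i (ω.map (Function.Embedding.subtype fun j => j ≠ i)))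
    (fun S => S.subtype (fun j => j ≠ i)) ?_ ?_ ?_ ?_ ?_
  · intro ω hω
    simp only [Finset.mem_filter, Finset.mem_univ, true_and] at hω ⊢
    exact ⟨Finset.mem_insert_self _ _, (omega_iff C i ω).mp hω⟩
  · intro S hS
    simp only [Finset.mem_filter, Finset.mem_univ, true_and] at hS ⊢
    rw [omega_iff]
    obtain ⟨hiS, c, hC, h0, hci⟩ := hS
    refine ⟨c, hC, fun j hj => h0 j ?_, hci⟩
    intro hjS
    apply hj
    rw [mem_fwd]
    by_cases hji : j = i
    · exact Or.inl hji
    · exact Or.inr ⟨hji, by simp [Finset.mem_subtype, hjS]⟩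
  · intro ω hω
    ext ⟨j, hj⟩
    simp only [Finset.mem_subtype, mem_fwd]
    constructor
    · rintro (h | ⟨h, hω'⟩)
      · exact absurd h hj
      · exact hω'
    · intro h; exact Or.inr ⟨hj, h⟩
  · intro S hS
    simp only [Finset.mem_filter, Finset.mem_univ, true_and] at hS
    ext j
    rw [mem_fwd]
    constructor
    · rintro (rfl | ⟨h, hω⟩)
      · exact hS.1
      · simpa using (Finset.mem_subtype.mp hω)
    · intro hjS
      by_cases hji : j = i
      · exact Or.inl hji
      · exact Or.inr ⟨hji, Finset.mem_subtype.mpr hjS⟩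
  · intro ω hω
    have hnotmem : i ∉ ω.map (Function.Embedding.subtype fun j => j ≠ i) := by
      simp only [Finset.mem_map, Function.Embedding.coe_subtype]
      rintro ⟨⟨a, ha⟩, -, h⟩
      exact ha h
    rw [Finset.card_insert_of_notMem hnotmem, Finset.card_map]

end PerI

open Classical in
lemma integral_mu {N : ℕ} (hN : 0 < N) (C : Submodule (ZMod 2) (Fin N → ZMod 2)) (i : Fin N) :
    ∫ ε in (0:ℝ)..1, mu ε (Omega C i)
      = ∑ ω ∈ Finset.univ.filter (fun w => w ∈ Omega C i), wgt N (ω.card + 1) := by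
  unfold mu
  rw [intervalIntegral.integral_finset_sum]
  · refine Finset.sum_congr rfl fun ω hω => ?_
    have hM : Fintype.card {j : Fin N // j ≠ i} = N - 1 := by
      simp [Fintype.card_subtype_compl]
    have hcard : ω.card ≤ N - 1 := by
      calc ω.card ≤ (Finset.univ : Finset {j : Fin N // j ≠ i}).card := Finset.card_le_univ ω
      _ = N - 1 := by rw [Finset.card_univ, hM]
    rw [hM, beta_nat]
    have he : ω.card + (N - 1 - ω.card) + 1 = N := by omega
    rw [he]
    unfold wgt
    have h2 : N - (ω.card + 1) = N - 1 - ω.card := by omega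
    rw [Nat.add_sub_cancel, h2]
  · intro ω hω
    exact ((continuous_pow _).mul
      ((continuous_const.sub continuous_id).pow _)).intervalIntegrable _ _

open Classical Finset in
lemma swap_sum {N : ℕ} (C : Submodule (ZMod 2) (Fin N → ZMod 2)) :
    ∑ i : Fin N, ∑ S ∈ Finset.univ.filter (fun S : Finset (Fin N) =>
        i ∈ S ∧ ∃ c ∈ C, (∀ j ∉ S, c j = 0) ∧ c i = 1), wgt N S.card
    = ∑ S : Finset (Fin N), ∑ i ∈ S,
        (if ∃ c ∈ C, (∀ j ∉ S, c j = 0) ∧ c i = 1 then (1:ℝ) else 0) * wgt N S.card := by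
  simp_rw [Finset.sum_filter]
  rw [Finset.sum_comm]
  refine Finset.sum_congr rfl fun S _ => ?_
  have h1 : ∀ i : Fin N,
      (if i ∈ S ∧ ∃ c ∈ C, (∀ j ∉ S, c j = 0) ∧ c i = 1 then wgt N S.card else 0)
      = if i ∈ S then
          (if ∃ c ∈ C, (∀ j ∉ S, c j = 0) ∧ c i = 1 then (1:ℝ) else 0) * wgt N S.card
        else 0 := by
    intro i
    split_ifs <;> simp_all
  rw [Finset.sum_congr rfl fun i _ => h1 i, Finset.sum_ite_mem, Finset.univ_inter]

/-- Area Theorem (total area): the average EXIT function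
$h(\varepsilon) = \frac1N \sum_i \mu_\varepsilon(\Omega_i(C))$ of a binary linear
code $C[N,K]$ satisfies $\int_0^1 h(\varepsilon)\,d\varepsilon = K/N$. -/
theorem area_theorem_total (N : ℕ) (hN : 0 < N)
    (C : Submodule (ZMod 2) (Fin N → ZMod 2)) :
    ∫ ε in (0:ℝ)..1, (1 / (N : ℝ)) * ∑ i : Fin N, mu ε (Omega C i)
      = (Module.finrank (ZMod 2) C : ℝ) / N := by
  have hcont : ∀ i : Fin N, Continuous fun ε : ℝ => mu ε (Omega C i) := by
    intro i
    unfold mu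
    exact continuous_finset_sum _ fun ω _ =>
      (continuous_pow _).mul ((continuous_const.sub continuous_id).pow _)
  rw [intervalIntegral.integral_const_mul,
    intervalIntegral.integral_finset_sum
      (fun i _ => (hcont i).intervalIntegrable _ _),
    Finset.sum_congr rfl fun i _ => integral_mu hN C i,
    Finset.sum_congr rfl fun i _ => sum_omega_eq C i,
    swap_sum C, main_sum C]
  rw [one_div, inv_mul_eq_div]
end
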